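/- Consider the continuous Petri net with places p1, p2 and transitions t1, t2 where W(p1,t1)=1, W(t1,p2)=1, W(p2,t2)=2, W(t2,p1)=1, and initial marking m0(p1)=1, m0(p2)=0. Then the empty marking (0,0) is not reachable by any finite firing sequence, but it is reachable in the limit of an infinite firing sequence. -/

import Mathlib

open Relation Filter

/-! ### Boolean networks and their semantics -/

abbrev Config (n : ℕ) := Fin n → Bool
abbrev BN (n : ℕ) := Config n → Fin n → Bool

def Delta {n : ℕ} (x y : Config n) : Set (Fin n) := {i | x i ≠ y i}

def fa {n : ℕ} (f : BN n) (x y : Config n) : Prop :=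
  ∃ i, Delta x y = {i} ∧ f x i = y i

def syn {n : ℕ} (f : BN n) (x y : Config n) : Prop := ∀ i, f x i = y i

def ga {n : ℕ} (f : BN n) (x y : Config n) : Prop := ∀ i ∈ Delta x y, f x i = y i

/-! ### Most permissive semantics -/

inductive MPV where
  | b : Bool → MPV
  | up : MPV
  | down : MPV
deriving DecidableEq

abbrev MPConfig (n : ℕ) := Fin n → MPV

def toMP {n : ℕ} (x : Config n) : MPConfig n := fun i => .b (x i)

def beta {n : ℕ} (xh : MPConfig n) : Set (Config n) :=
  {x | ∀ i v, xh i = .b v → x i = v}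

def mpStep {n : ℕ} (f : BN n) (xh yh : MPConfig n) : Prop :=
  ∃ i, (∀ j, j ≠ i → xh j = yh j) ∧ xh i ≠ yh i ∧
    ((xh i = .up ∧ yh i = .b true) ∨
     (xh i = .down ∧ yh i = .b false) ∨
     (xh i ≠ .b true ∧ yh i = .up ∧ ∃ x ∈ beta xh, f x i = true) ∨
     (xh i ≠ .b false ∧ yh i = .down ∧ ∃ x ∈ beta xh, f x i = false))

def mp {n : ℕ} (f : BN n) (x y : Config n) : Prop :=
  ReflTransGen (mpStep f) (toMP x) (toMP y)

/-! ### Petri nets (discrete and continuous) -/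

structure Net (P T : Type) where
  wPT : P → T → ℕ
  wTP : T → P → ℕ

def dfire {P T : Type} (N : Net P T) (t : T) (M M' : P → ℕ) : Prop :=
  (∀ p, N.wPT p t ≤ M p) ∧ ∀ p, M' p = M p - N.wPT p t + N.wTP t p

def dReach {P T : Type} (N : Net P T) : (P → ℕ) → (P → ℕ) → Prop :=
  ReflTransGen (fun M M' => ∃ t, dfire N t M M')

def cfire {P T : Type} (N : Net P T) (t : T) (α : ℝ) (m m' : P → ℝ) : Prop :=
  0 ≤ α ∧ (∀ p, α * N.wPT p t ≤ m p) ∧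
    ∀ p, m' p = m p - α * N.wPT p t + α * N.wTP t p

def cReach {P T : Type} (N : Net P T) : (P → ℝ) → (P → ℝ) → Prop :=
  ReflTransGen (fun m m' => ∃ t α, cfire N t α m m')

def limReach {P T : Type} (N : Net P T) (m m' : P → ℝ) : Prop :=
  ∃ ms : ℕ → P → ℝ, ms 0 = m ∧
    (∀ k, ∃ t α, cfire N t α (ms k) (ms (k+1))) ∧
    Tendsto ms atTop (nhds m')

def IsTrap {P T : Type} (N : Net P T) (S : Set P) : Prop :=
  ∀ t, (∃ p ∈ S, 0 < N.wPT p t) → ∃ p ∈ S, 0 < N.wTP t p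

def enabPos {P T : Type} (N : Net P T) (t : T) (m : P → ℝ) : Prop :=
  ∀ p, 0 < N.wPT p t → 0 < m p

def enabGe {P T : Type} (N : Net P T) (t : T) (m : P → ℝ) (c : ℝ) : Prop :=
  ∀ p, 0 < N.wPT p t → c * N.wPT p t ≤ m p

/-! ### Petri net encoding of Boolean networks -/

abbrev Clause (n : ℕ) := Fin n → Option Bool

def satC {n : ℕ} (z : Config n) (C : Clause n) : Prop :=
  ∀ j v, C j = some v → z j = v

structure ETrans (n : ℕ) where
  i : Fin n
  s : Bool
  C : Clause n

abbrev EPlace (n : ℕ) := Fin n × Bool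

def encNet (n : ℕ) : Net (EPlace n) (ETrans n) where
  wPT := fun p t =>
    if p.1 = t.i then (if p.2 = !t.s then 1 else 0)
    else (if t.C p.1 = some p.2 then 1 else 0)
  wTP := fun t p =>
    if p.1 = t.i then (if p.2 = t.s then 1 else 0)
    else (if t.C p.1 = some p.2 then 1 else 0)

def mu {n : ℕ} (xh : MPConfig n) : Set (EPlace n → ℝ) :=
  {m | (∀ p, 0 ≤ m p) ∧ ∀ i,
    m (i, false) + m (i, true) = 1 ∧
    (∀ v, xh i = .b v → m (i, v) = 1) ∧
    ((xh i = .up ∨ xh i = .down) →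
      0 < m (i, false) ∧ m (i, false) < 1 ∧ 0 < m (i, true) ∧ m (i, true) < 1)}

noncomputable def canon {n : ℕ} (xh : MPConfig n) : EPlace n → ℝ := fun p =>
  match xh p.1 with
  | .b v => if p.2 = v then 1 else 0
  | _ => 1/2

def validT {n : ℕ} (D : Fin n → Bool → Set (Clause n)) (t : ETrans n) : Prop :=
  t.C ∈ D t.i t.s

def IsDNF {n : ℕ} (f : BN n) (D : Fin n → Bool → Set (Clause n)) : Prop :=
  (∀ i s z, (∃ C ∈ D i s, satC z C) ↔ (z i = !s ∧ f z i = s)) ∧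
  (∀ i s C, C ∈ D i s → C i = some (!s))

def cReachG {P T : Type} (N : Net P T) (good : T → Prop) :
    (P → ℝ) → (P → ℝ) → Prop :=
  ReflTransGen (fun m m' => ∃ t, good t ∧ ∃ α, cfire N t α m m')

def climReachG {P T : Type} (N : Net P T) (good : T → Prop) (m m' : P → ℝ) : Prop :=
  ∃ ms : ℕ → P → ℝ, ms 0 = m ∧
    (∀ k, ∃ t, good t ∧ ∃ α, cfire N t α (ms k) (ms (k+1))) ∧
    Tendsto ms atTop (nhds m')

/-- The concrete running-example net: W(p1,t1)=1, W(t1,p2)=1, W(p2,t2)=2,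
W(t2,p1)=1, all other weights 0.  Place `0` is p1, place `1` is p2,
transition `0` is t1 and transition `1` is t2. -/
def exampleNet : Net (Fin 2) (Fin 2) where
  wPT := fun p t =>
    if p = 0 ∧ t = 0 then 1 else if p = 1 ∧ t = 1 then 2 else 0
  wTP := fun t p =>
    if t = 0 ∧ p = 1 then 1 else if t = 1 ∧ p = 0 then 1 else 0

/-! The two places form a trap, and in a continuous net a marked trap stays marked along
any finite firing sequence, so the empty marking is unreachable. Firing `t1` and `t2` in turn,
each to exhaustion, maps `(a, 0)` to `(0, a)` and then to `(a/2, 0)`; the resulting infinite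
run converges to the empty marking. -/

theorem IsTrap.exists_pos_of_cfire {P T : Type} {N : Net P T} {S : Set P} (hS : IsTrap N S)
    {t : T} {α : ℝ} {m m' : P → ℝ} (hfire : cfire N t α m m') (hm : ∃ p ∈ S, 0 < m p) :
    ∃ p ∈ S, 0 < m' p := by
  obtain ⟨hα, henab, hm'⟩ := hfire
  obtain ⟨p, hpS, hp⟩ := hm
  rcases hα.eq_or_lt with rfl | hα
  · exact ⟨p, hpS, by simpa [hm' p] using hp⟩
  by_cases hin : ∃ q ∈ S, 0 < N.wPT q t
  · -- the trap refills one of its places, and enabling keeps the consumed part nonnegative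
    obtain ⟨r, hrS, hr⟩ := hS t hin
    refine ⟨r, hrS, ?_⟩
    have : (0 : ℝ) < N.wTP t r := by exact_mod_cast hr
    rw [hm' r]
    nlinarith [henab r]
  · have hp0 : N.wPT p t = 0 := by
      by_contra hne
      exact hin ⟨p, hpS, Nat.pos_of_ne_zero hne⟩
    refine ⟨p, hpS, ?_⟩
    rw [hm' p, hp0, Nat.cast_zero, mul_zero, sub_zero]
    positivity

theorem IsTrap.exists_pos_of_cReach {P T : Type} {N : Net P T} {S : Set P} (hS : IsTrap N S)
    {m m' : P → ℝ} (hreach : cReach N m m') (hm : ∃ p ∈ S, 0 < m p) :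
    ∃ p ∈ S, 0 < m' p := by
  induction hreach with
  | refl => exact hm
  | tail _ hstep ih =>
    obtain ⟨t, α, hfire⟩ := hstep
    exact hS.exists_pos_of_cfire hfire ih

theorem cfire.smul {P T : Type} {N : Net P T} {t : T} {α : ℝ} {m m' : P → ℝ}
    (hfire : cfire N t α m m') {c : ℝ} (hc : 0 ≤ c) :
    cfire N t (c * α) (c • m) (c • m') := by
  obtain ⟨hα, henab, hm'⟩ := hfire
  refine ⟨mul_nonneg hc hα, fun p => ?_, fun p => ?_⟩
  · simpa [mul_assoc] using mul_le_mul_of_nonneg_left (henab p) hc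
  · simp only [Pi.smul_apply, smul_eq_mul, hm' p]
    ring

theorem exampleNet_isTrap_univ : IsTrap exampleNet Set.univ := by
  intro t _
  fin_cases t
  · exact ⟨1, trivial, by simp [exampleNet]⟩
  · exact ⟨0, trivial, by simp [exampleNet]⟩

noncomputable def halvingRun : ℕ → Fin 2 → ℝ
  | 0 => ![1, 0]
  | 1 => ![0, 1]
  | k + 2 => (1 / 2 : ℝ) • halvingRun k

theorem halvingRun_cfire (k : ℕ) :
    ∃ t α, cfire exampleNet t α (halvingRun k) (halvingRun (k + 1)) := by
  induction k using Nat.twoStepInduction with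
  | zero =>
    refine ⟨0, 1, zero_le_one, fun p => ?_, fun p => ?_⟩ <;>
      fin_cases p <;> simp [exampleNet, halvingRun]
  | one =>
    refine ⟨1, 1 / 2, by norm_num, fun p => ?_, fun p => ?_⟩ <;>
      fin_cases p <;> norm_num [exampleNet, halvingRun]
  | more k ih _ =>
    obtain ⟨t, α, hfire⟩ := ih
    exact ⟨t, _, hfire.smul (by norm_num)⟩

theorem norm_halvingRun_le (k : ℕ) : ‖halvingRun k‖ ≤ (1 / 2 : ℝ) ^ (k / 2) := by
  induction k using Nat.twoStepInduction with
  | zero => simp [halvingRun, pi_norm_le_iff_of_nonneg, Fin.forall_fin_two]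
  | one => simp [halvingRun, pi_norm_le_iff_of_nonneg, Fin.forall_fin_two]
  | more k ih _ =>
    rw [halvingRun, norm_smul, show (k + 2) / 2 = k / 2 + 1 by omega, pow_succ',
      Real.norm_of_nonneg (by norm_num)]
    gcongr

theorem tendsto_halvingRun : Tendsto halvingRun atTop (nhds 0) := by
  refine squeeze_zero_norm norm_halvingRun_le ?_
  exact (tendsto_pow_atTop_nhds_zero_of_lt_one (by norm_num) (by norm_num)).comp
    (Nat.tendsto_div_const_atTop two_ne_zero)

/-- from the initial marking (1,0) the empty marking is not
reachable by any finite firing sequence, but it is lim-reachable. -/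
theorem empty_marking_lim_reachable_only :
    ¬ cReach exampleNet ![(1:ℝ), 0] (fun _ => (0:ℝ)) ∧
      limReach exampleNet ![(1:ℝ), 0] (fun _ => (0:ℝ)) := by
  refine ⟨fun hreach => ?_, ⟨halvingRun, rfl, halvingRun_cfire, tendsto_halvingRun⟩⟩
  obtain ⟨p, -, hp⟩ :=
    exampleNet_isTrap_univ.exists_pos_of_cReach hreach ⟨0, trivial, by simp⟩
  exact hp.false
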